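/- arXiv:1405.6579 — 4 statements merged into one kernel-verified Lean document; each statement's English description precedes it below -/
import Mathlib

section
/- Let n ≥ 1, let i, j ∈ {1,…,n}, let p ∈ ℝⁿ with p ≠ 0, and let f : ℝⁿ\{0} → ℂ be twice continuously differentiable on a neighborhood of p. Then the deformed one-particle coordinate operators satisfy the QFT-Moyal-Weyl commutation relation (A_i(A_j f))(p) − (A_j(A_i f))(p) = 2i (θ_{0i} p_j/‖p‖ − θ_{0j} p_i/‖p‖) f(p) + 2i θ_{ij} f(p); that is, the commutator of the deformed coordinates is the bounded multiplication operator 2i(θ_{0i} V_j − θ_{0j} V_i) + 2i θ_{ij}, where V_j denotes multiplication by the velocity p_j/‖p‖. -/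
open MeasureTheory Real Filter

noncomputable section

/-- ℝⁿ as a Euclidean space. -/
abbrev Eu (n : ℕ) := EuclideanSpace ℝ (Fin n)

/-- Partial derivative ∂f/∂p_j at p. -/
def pd {n : ℕ} (j : Fin n) (f : Eu n → ℂ) (p : Eu n) : ℂ :=
  fderiv ℝ f p (EuclideanSpace.single j 1)

/-- g_μ(p) = θ_{μ0}‖p‖ + Σ_{k=1}^n θ_{μk} p_k. -/
def gθ {n : ℕ} (θ : Fin (n + 1) → Fin (n + 1) → ℝ) (μ : Fin (n + 1)) (p : Eu n) : ℝ :=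
  θ μ 0 * ‖p‖ + ∑ k : Fin n, θ μ k.succ * p k

/-- The deformed one-particle coordinate operator
(A_j f)(p) = −i ∂f/∂p_j(p) − g_0(p)(p_j/‖p‖) f(p) + g_j(p) f(p). -/
def Aop {n : ℕ} (θ : Fin (n + 1) → Fin (n + 1) → ℝ) (j : Fin n) (f : Eu n → ℂ) :
    Eu n → ℂ :=
  fun p => -Complex.I * pd j f p
    - ((gθ θ 0 p * (p j / ‖p‖) : ℝ) : ℂ) * f p + ((gθ θ j.succ p : ℝ) : ℂ) * f p

/-! Each `A_j` is a component `-i ∂_j + Φ_j` of a minimally coupled momentum with a real potential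
`Φ_j = g_j - g_0 p_j / ‖p‖`. For such operators the second derivatives of `f` cancel by symmetry of
the Hessian and the first-order terms cancel pairwise, so `[A_i, A_j]` is multiplication by the
field strength `i (∂_j Φ_i - ∂_i Φ_j)`. In this curl the `g_0`-terms drop out because the Jacobian
`(δ_ij - v_i v_j) / ‖p‖` of the velocity `v = p / ‖p‖` is symmetric, and what remains combines into
the right-hand side by the skew-symmetry of `θ`. -/

section CovariantMomentum

open Complex

variable {E : Type*} [NormedAddCommGroup E] [NormedSpace ℝ E]

def covariantMomentum (u : E) (M : E → ℝ) (g : E → ℂ) : E → ℂ :=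
  fun q => -I * fderiv ℝ g q u + (M q : ℂ) * g q

theorem hasFDerivAt_covariantMomentum {M : E → ℝ} {f : E → ℂ} {p : E}
    (hM : DifferentiableAt ℝ M p) (hf : ContDiffAt ℝ 2 f p) (v : E) :
    HasFDerivAt (covariantMomentum v M f)
      (-I • (ContinuousLinearMap.apply ℝ ℂ v).comp (fderiv ℝ (fderiv ℝ f) p) +
        ((M p : ℂ) • fderiv ℝ f p + f p • ofRealCLM.comp (fderiv ℝ M p))) p := by
  have hDf : HasFDerivAt (fderiv ℝ f) (fderiv ℝ (fderiv ℝ f) p) p :=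
    ((hf.fderiv_right (m := 1) le_rfl).differentiableAt one_ne_zero).hasFDerivAt
  have hMc : HasFDerivAt (fun q => (M q : ℂ)) (ofRealCLM.comp (fderiv ℝ M p)) p :=
    ofRealCLM.hasFDerivAt.comp p hM.hasFDerivAt
  exact (((ContinuousLinearMap.apply ℝ ℂ v).hasFDerivAt.comp p hDf).const_mul (-I)).fun_add
    (hMc.fun_mul (hf.differentiableAt two_ne_zero).hasFDerivAt)

theorem fderiv_covariantMomentum_apply {M : E → ℝ} {f : E → ℂ} {p : E}
    (hM : DifferentiableAt ℝ M p) (hf : ContDiffAt ℝ 2 f p) (u v : E) :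
    fderiv ℝ (covariantMomentum v M f) p u =
      -I * fderiv ℝ (fderiv ℝ f) p u v + ((fderiv ℝ M p u : ℂ) * f p + M p * fderiv ℝ f p u) := by
  rw [(hasFDerivAt_covariantMomentum hM hf v).fderiv]
  simp only [add_apply, smul_apply, ContinuousLinearMap.comp_apply,
    ContinuousLinearMap.apply_apply, ofRealCLM_apply, smul_eq_mul]
  ring

theorem covariantMomentum_commutator {M N : E → ℝ} {f : E → ℂ} {p : E}
    (hM : DifferentiableAt ℝ M p) (hN : DifferentiableAt ℝ N p) (hf : ContDiffAt ℝ 2 f p)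
    (u v : E) :
    covariantMomentum u M (covariantMomentum v N f) p -
        covariantMomentum v N (covariantMomentum u M f) p =
      I * ((fderiv ℝ M p v - fderiv ℝ N p u : ℝ) : ℂ) * f p := by
  have hsymm : fderiv ℝ (fderiv ℝ f) p u v = fderiv ℝ (fderiv ℝ f) p v u :=
    hf.isSymmSndFDerivAt (by simp) u v
  simp only [covariantMomentum, fderiv_covariantMomentum_apply hM hf,
    fderiv_covariantMomentum_apply hN hf, hsymm]
  push_cast
  ring

end CovariantMomentum

theorem hasFDerivAt_norm_of_ne_zero {F : Type*} [NormedAddCommGroup F] [InnerProductSpace ℝ F]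
    {x : F} (hx : x ≠ 0) : HasFDerivAt (‖·‖) (‖x‖⁻¹ • innerSL ℝ x) x := by
  have hx' : ‖x‖ ≠ 0 := norm_ne_zero_iff.mpr hx
  have h := (hasStrictFDerivAt_norm_sq x).hasFDerivAt.sqrt (pow_ne_zero 2 hx')
  simp only [Real.sqrt_sq (norm_nonneg _)] at h
  convert h using 1
  ext y
  simp only [smul_apply, coe_innerSL_apply, smul_eq_mul, one_div, mul_inv_rev, nsmul_eq_mul,
    Nat.cast_ofNat]
  field_simp

section Deformation

variable {n : ℕ} (θ : Fin (n + 1) → Fin (n + 1) → ℝ) {p : Eu n}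

def deformationPotential (j : Fin n) (q : Eu n) : ℝ :=
  gθ θ j.succ q - gθ θ 0 q * (q j / ‖q‖)

theorem Aop_eq_covariantMomentum (j : Fin n) :
    Aop θ j = covariantMomentum (EuclideanSpace.single j 1) (deformationPotential θ j) := by
  funext f q
  simp only [Aop, covariantMomentum, pd, deformationPotential]
  push_cast
  ring

theorem hasFDerivAt_gθ (μ : Fin (n + 1)) (hp : p ≠ 0) :
    HasFDerivAt (gθ θ μ)
      (θ μ 0 • ‖p‖⁻¹ • innerSL ℝ p + ∑ k, θ μ k.succ • EuclideanSpace.proj k) p :=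
  ((hasFDerivAt_norm_of_ne_zero hp).const_mul (θ μ 0)).add
    (HasFDerivAt.fun_sum fun k _ =>
      (EuclideanSpace.proj (𝕜 := ℝ) k).hasFDerivAt.const_mul (θ μ k.succ))

theorem hasFDerivAt_velocity (j : Fin n) (hp : p ≠ 0) :
    HasFDerivAt (fun q : Eu n => q j / ‖q‖)
      (‖p‖⁻¹ • (EuclideanSpace.proj j - (p j / ‖p‖ ^ 2) • innerSL ℝ p)) p := by
  have hp' : ‖p‖ ≠ 0 := norm_ne_zero_iff.mpr hp
  have hinv := (hasDerivAt_inv hp').comp_hasFDerivAt p (hasFDerivAt_norm_of_ne_zero hp)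
  have h : HasFDerivAt (fun q : Eu n => q j * ‖q‖⁻¹)
      (p j • -(‖p‖ ^ 2)⁻¹ • ‖p‖⁻¹ • innerSL ℝ p + ‖p‖⁻¹ • EuclideanSpace.proj j) p :=
    (EuclideanSpace.proj (𝕜 := ℝ) j).hasFDerivAt.mul hinv
  simp only [div_eq_mul_inv]
  refine h.congr_fderiv ?_
  ext y
  simp only [neg_smul, smul_neg, add_apply, neg_apply, smul_apply, coe_innerSL_apply, smul_eq_mul,
    PiLp.proj_apply, sub_apply]
  ring

theorem hasFDerivAt_deformationPotential (j : Fin n) (hp : p ≠ 0) :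
    HasFDerivAt (deformationPotential θ j)
      ((θ j.succ 0 • ‖p‖⁻¹ • innerSL ℝ p + ∑ k, θ j.succ k.succ • EuclideanSpace.proj k) -
        (gθ θ 0 p • ‖p‖⁻¹ • (EuclideanSpace.proj j - (p j / ‖p‖ ^ 2) • innerSL ℝ p) +
          (p j / ‖p‖) • (θ 0 0 • ‖p‖⁻¹ • innerSL ℝ p + ∑ k, θ 0 k.succ • EuclideanSpace.proj k))) p :=
  (hasFDerivAt_gθ θ j.succ hp).sub ((hasFDerivAt_gθ θ 0 hp).mul (hasFDerivAt_velocity j hp))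

theorem fderiv_deformationPotential_single (i j : Fin n) (hp : p ≠ 0) :
    fderiv ℝ (deformationPotential θ j) p (EuclideanSpace.single i 1) =
      θ j.succ 0 * (p i / ‖p‖) + θ j.succ i.succ -
        (gθ θ 0 p * ((if j = i then 1 else 0) - p i * p j / ‖p‖ ^ 2) / ‖p‖ +
          (p j / ‖p‖) * (θ 0 0 * (p i / ‖p‖) + θ 0 i.succ)) := by
  rw [(hasFDerivAt_deformationPotential θ j hp).fderiv]
  simp only [smul_add, sub_apply, add_apply, smul_apply, coe_innerSL_apply,
    EuclideanSpace.inner_single_right, ringHom_apply, one_mul, smul_eq_mul, sum_apply,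
    PiLp.proj_apply, PiLp.single_apply, mul_ite, mul_one, mul_zero, Finset.sum_ite_eq',
    Finset.mem_univ, ↓reduceIte]
  field_simp

theorem deformationPotential_curl (hθ0 : ∀ j : Fin n, θ 0 j.succ = θ j.succ 0)
    (hθs : ∀ i j : Fin n, θ i.succ j.succ = -θ j.succ i.succ) (i j : Fin n) (hp : p ≠ 0) :
    fderiv ℝ (deformationPotential θ i) p (EuclideanSpace.single j 1) -
        fderiv ℝ (deformationPotential θ j) p (EuclideanSpace.single i 1) =
      2 * (θ 0 i.succ * (p j / ‖p‖) - θ 0 j.succ * (p i / ‖p‖)) + 2 * θ i.succ j.succ := by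
  rw [fderiv_deformationPotential_single θ j i hp, fderiv_deformationPotential_single θ i j hp,
    ← hθ0 i, ← hθ0 j, hθs j i]
  simp only [eq_comm (a := j) (b := i)]
  ring

end Deformation

theorem stmt0_general {n : ℕ} (θ : Fin (n + 1) → Fin (n + 1) → ℝ)
    (hθ0 : ∀ j : Fin n, θ 0 j.succ = θ j.succ 0)
    (hθs : ∀ i j : Fin n, θ i.succ j.succ = -θ j.succ i.succ)
    (i j : Fin n) (p : Eu n) (hp : p ≠ 0)
    (f : Eu n → ℂ) (hf : ContDiffAt ℝ 2 f p) :
    Aop θ i (Aop θ j f) p - Aop θ j (Aop θ i f) p =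
      2 * Complex.I * ((θ 0 i.succ * (p j / ‖p‖) - θ 0 j.succ * (p i / ‖p‖) : ℝ) : ℂ) * f p
        + 2 * Complex.I * ((θ i.succ j.succ : ℝ) : ℂ) * f p := by
  have hΦ (k : Fin n) : DifferentiableAt ℝ (deformationPotential θ k) p :=
    (hasFDerivAt_deformationPotential θ k hp).differentiableAt
  rw [Aop_eq_covariantMomentum, Aop_eq_covariantMomentum,
    covariantMomentum_commutator (hΦ i) (hΦ j) hf, deformationPotential_curl θ hθ0 hθs i j hp]
  push_cast
  ring

/-- QFT-Moyal-Weyl commutation relation of the deformed one-particle coordinate operators: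
(A_i(A_j f))(p) − (A_j(A_i f))(p)
  = 2i(θ_{0i} p_j/‖p‖ − θ_{0j} p_i/‖p‖) f(p) + 2i θ_{ij} f(p). -/
theorem stmt0 {n : ℕ} (hn : 1 ≤ n) (θ : Fin (n + 1) → Fin (n + 1) → ℝ)
    (hθ00 : θ 0 0 = 0)
    (hθ0 : ∀ j : Fin n, θ 0 j.succ = θ j.succ 0)
    (hθs : ∀ i j : Fin n, θ i.succ j.succ = -θ j.succ i.succ)
    (i j : Fin n) (p : Eu n) (hp : p ≠ 0)
    (f : Eu n → ℂ) (hf : ContDiffAt ℝ 2 f p) :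
    Aop θ i (Aop θ j f) p - Aop θ j (Aop θ i f) p =
      2 * Complex.I * ((θ 0 i.succ * (p j / ‖p‖) - θ 0 j.succ * (p i / ‖p‖) : ℝ) : ℂ) * f p
        + 2 * Complex.I * ((θ i.succ j.succ : ℝ) : ℂ) * f p :=
  stmt0_general θ hθ0 hθs i j p hp f hf

end
end

section
/- For every f ∈ 𝒮(ℝⁿ) (n ≥ 1) and every j ∈ {1,…,n}, the function X₀f is partially differentiable with respect to p_j on ℝⁿ, and X₀(−i ∂f/∂p_j)(p) = −i ∂(X₀f)/∂p_j(p) for all p ∈ ℝⁿ. That is, the temporal coordinate operator X₀ and the spatial coordinate operator X_j = −i ∂/∂p_j commute on Schwartz functions: [X₀, X_j] = 0. -/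
/-!
With Mathlib's normalisation `𝓕 g ξ = ∫ e^{-2πi⟨v, ξ⟩} g v dv`, the substitution `x = 2π y` gives
`X₀ f = 2π · 𝓕 (‖·‖ · 𝓕⁻ f)`. As `𝓕⁻ f` is a Schwartz function, `‖v‖ · 𝓕⁻ f v` has an integrable
first moment, so its Fourier transform is differentiable with `∂_m 𝓕 g = 𝓕 (-2πi ⟨·, m⟩ g)`.
On the other side `𝓕⁻ (∂_m f) = -2πi ⟨·, m⟩ 𝓕⁻ f`, so `∂_m (X₀ f)` and `X₀ (∂_m f)` are both
`2π · 𝓕 (-2πi ⟨·, m⟩ ‖·‖ 𝓕⁻ f)`.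
-/

open MeasureTheory Real Filter
open scoped RealInnerProductSpace SchwartzMap

noncomputable section

/-- The Fourier transform (𝓕ψ)(p) = (2π)^{-n/2} ∫ e^{-i⟨p,x⟩} ψ(x) dx. -/
def FT {n : ℕ} (ψ : Eu n → ℂ) (p : Eu n) : ℂ :=
  (Real.sqrt ((2 * Real.pi) ^ n))⁻¹ • ∫ x, Complex.exp (-Complex.I * (⟪p, x⟫ : ℝ)) * ψ x

/-- The inverse Fourier transform (𝓕⁻¹ψ)(x) = (2π)^{-n/2} ∫ e^{i⟨x,p⟩} ψ(p) dp. -/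
def FTinv {n : ℕ} (ψ : Eu n → ℂ) (x : Eu n) : ℂ :=
  (Real.sqrt ((2 * Real.pi) ^ n))⁻¹ • ∫ p, Complex.exp (Complex.I * (⟪x, p⟫ : ℝ)) * ψ p

/-- The one-particle temporal coordinate operator X₀f = 𝓕(x ↦ ‖x‖·(𝓕⁻¹f)(x)). -/
def X0 {n : ℕ} (f : Eu n → ℂ) : Eu n → ℂ :=
  FT (fun x => (‖x‖ : ℂ) * FTinv f x)

open scoped FourierTransform LineDeriv

namespace Real

variable {V E : Type*} [NormedAddCommGroup V] [InnerProductSpace ℝ V] [FiniteDimensional ℝ V]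
  [MeasurableSpace V] [BorelSpace V] [NormedAddCommGroup E] [NormedSpace ℂ E]

theorem fourier_const_smul (c : ℂ) (g : V → E) : 𝓕 (c • g) = c • 𝓕 g :=
  VectorFourier.fourierIntegral_const_smul _ _ _ _ _

theorem hasLineDerivAt_fourier {g : V → E} (hg : Integrable g)
    (hvg : Integrable fun v => ‖v‖ * ‖g v‖) (p m : V) :
    HasLineDerivAt ℝ (𝓕 g) (𝓕 (fun v => (-(2 * π * Complex.I) * ⟪v, m⟫) • g v) p) p m := by
  have hint : Integrable (VectorFourier.fourierSMulRight (innerSL ℝ) g) := by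
    refine (hvg.const_mul (2 * π * ‖(innerSL ℝ : V →L[ℝ] V →L[ℝ] ℝ)‖)).mono'
      hg.aestronglyMeasurable.fourierSMulRight (ae_of_all _ fun v => ?_)
    grw [VectorFourier.norm_fourierSMulRight_le]
    exact (mul_assoc _ _ _).le
  convert ((hasFDerivAt_fourier hg hvg p).hasLineDerivAt m) using 1
  rw [fourier_continuousLinearMap_apply hint]
  refine congrArg (fun φ : V → E => 𝓕 φ p) (funext fun v => ?_)
  simp [mul_smul, innerSL_apply_apply ℝ]

end Real

namespace SchwartzMap

variable {V : Type*} [NormedAddCommGroup V] [InnerProductSpace ℝ V] [FiniteDimensional ℝ V]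
  [MeasurableSpace V] [BorelSpace V]

theorem integrable_norm_mul (h : 𝓢(V, ℂ)) : Integrable fun v => (‖v‖ : ℂ) * h v :=
  (h.integrable_pow_mul volume 1).mono' (by fun_prop) (ae_of_all _ fun v => by simp)

theorem integrable_norm_mul_norm_mul (h : 𝓢(V, ℂ)) :
    Integrable fun v => ‖v‖ * ‖(‖v‖ : ℂ) * h v‖ :=
  (h.integrable_pow_mul volume 2).congr (ae_of_all _ fun v => by simp; ring)

theorem fourierInv_lineDerivOp_apply (f : 𝓢(V, ℂ)) (m y : V) :
    𝓕⁻ (⇑(∂_{m} f : 𝓢(V, ℂ))) y = -(2 * π * Complex.I) * ⟪y, m⟫ * 𝓕⁻ (⇑f) y := by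
  have : (inner ℝ · m).HasTemperateGrowth := by fun_prop
  rw [← fourierInv_coe, fourierInv_lineDerivOp_eq, ← fourierInv_coe]
  simp [smulLeftCLM_apply_apply this]
  ring

end SchwartzMap

section TemporalCoordinate

variable {n : ℕ}

theorem FTinv_eq_fourierInv (ψ : Eu n → ℂ) (x : Eu n) :
    FTinv ψ x = (√((2 * π) ^ n))⁻¹ • 𝓕⁻ ψ ((2 * π)⁻¹ • x) := by
  rw [FTinv, fourierInv_eq']
  congr 2 with p
  have : 2 * π * ⟪p, (2 * π)⁻¹ • x⟫ = ⟪x, p⟫ := by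
    rw [real_inner_smul_right, real_inner_comm]
    field_simp
  rw [this, smul_eq_mul, mul_comm (Complex.I)]

theorem FT_eq_fourier (ψ : Eu n → ℂ) (p : Eu n) :
    FT ψ p = ((√((2 * π) ^ n))⁻¹ * (2 * π) ^ n) • 𝓕 (fun y => ψ ((2 * π) • y)) p := by
  set g : Eu n → ℂ := fun x => Complex.exp (-Complex.I * (⟪p, x⟫ : ℝ)) * ψ x
  have hsub := Measure.integral_comp_smul volume g (2 * π)
  rw [finrank_euclideanSpace_fin, abs_of_pos (by positivity), eq_inv_smul_iff₀ (by positivity)]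
    at hsub
  rw [FT, ← hsub, mul_smul, fourier_eq']
  congr 3
  funext y
  simp only [g, real_inner_smul_right, smul_eq_mul, real_inner_comm p y]
  push_cast
  ring_nf

theorem X0_eq_fourier (ψ : Eu n → ℂ) (p : Eu n) :
    X0 ψ p = 2 * π * 𝓕 (fun y => (‖y‖ : ℂ) * 𝓕⁻ ψ y) p := by
  have hc : ((√((2 * π) ^ n))⁻¹) ^ 2 * (2 * π) ^ n = 1 := by
    rw [inv_pow, Real.sq_sqrt (by positivity), inv_mul_cancel₀ (by positivity)]
  have hscale : (fun y : Eu n => (‖(2 * π) • y‖ : ℂ) * FTinv ψ ((2 * π) • y))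
      = ((2 * π * (√((2 * π) ^ n))⁻¹ : ℝ) : ℂ) • fun y => (‖y‖ : ℂ) * 𝓕⁻ ψ y := by
    funext y
    rw [FTinv_eq_fourierInv, inv_smul_smul₀ (by positivity), norm_smul,
      Real.norm_of_nonneg (by positivity)]
    simp only [Pi.smul_apply, smul_eq_mul, Complex.real_smul]
    push_cast
    ring
  rw [X0, FT_eq_fourier, hscale, fourier_const_smul, Pi.smul_apply, Complex.real_smul,
    smul_eq_mul, ← mul_assoc]
  congr 1
  have hcC := congrArg ((↑) : ℝ → ℂ) hc
  push_cast at hcC ⊢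
  linear_combination (2 * π : ℂ) * hcC

theorem X0_const_mul (c : ℂ) (ψ : Eu n → ℂ) (p : Eu n) :
    X0 (fun q => c * ψ q) p = c * X0 ψ p := by
  have hinv : ∀ x, FTinv (fun q => c * ψ q) x = c * FTinv ψ x := fun x => by
    simp only [FTinv, mul_left_comm _ c, integral_const_mul, mul_smul_comm]
  simp only [X0, FT, hinv, mul_left_comm _ c, integral_const_mul, mul_smul_comm]

theorem hasLineDerivAt_X0 (f : 𝓢(Eu n, ℂ)) (p m : Eu n) :
    HasLineDerivAt ℝ (X0 f) (X0 (∂_{m} f : 𝓢(Eu n, ℂ)) p) p m := by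
  set h : 𝓢(Eu n, ℂ) := 𝓕⁻ f
  have hfh : 𝓕⁻ (⇑f) = ⇑h := (SchwartzMap.fourierInv_coe f).symm
  have hX0 : X0 (∂_{m} f : 𝓢(Eu n, ℂ)) p
      = 2 * π * 𝓕 (fun v => (-(2 * π * Complex.I) * ⟪v, m⟫) • ((‖v‖ : ℂ) * h v)) p := by
    rw [X0_eq_fourier]
    refine congrArg (fun φ : Eu n → ℂ => 2 * π * 𝓕 φ p) (funext fun v => ?_)
    rw [SchwartzMap.fourierInv_lineDerivOp_apply, hfh, smul_eq_mul]
    ring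
  rw [hX0, funext (X0_eq_fourier (f : Eu n → ℂ)), hfh]
  exact HasDerivAt.const_mul _
    (Real.hasLineDerivAt_fourier h.integrable_norm_mul h.integrable_norm_mul_norm_mul p m)

end TemporalCoordinate

theorem stmt2_general {n : ℕ} (f : 𝓢(Eu n, ℂ)) (j : Fin n) :
    (∀ p : Eu n, LineDifferentiableAt ℝ (X0 (f : Eu n → ℂ)) p (EuclideanSpace.single j 1)) ∧
      (∀ p : Eu n,
        X0 (fun q => -Complex.I * fderiv ℝ (f : Eu n → ℂ) q (EuclideanSpace.single j 1)) p
          = -Complex.I * lineDeriv ℝ (X0 (f : Eu n → ℂ)) p (EuclideanSpace.single j 1)) := by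
  refine ⟨fun p => (hasLineDerivAt_X0 f p _).lineDifferentiableAt, fun p => ?_⟩
  rw [X0_const_mul, (hasLineDerivAt_X0 f p _).lineDeriv]
  simp only [← SchwartzMap.lineDerivOp_apply_eq_fderiv]

/-- The temporal coordinate operator X₀ and the spatial coordinate operator
X_j = −i ∂/∂p_j commute on Schwartz functions: X₀f is partially differentiable with
respect to p_j and X₀(−i ∂f/∂p_j) = −i ∂(X₀f)/∂p_j. -/
theorem stmt2 {n : ℕ} (hn : 1 ≤ n) (f : 𝓢(Eu n, ℂ)) (j : Fin n) :
    (∀ p : Eu n, LineDifferentiableAt ℝ (X0 (f : Eu n → ℂ)) p (EuclideanSpace.single j 1)) ∧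
      (∀ p : Eu n,
        X0 (fun q => -Complex.I * fderiv ℝ (f : Eu n → ℂ) q (EuclideanSpace.single j 1)) p
          = -Complex.I * lineDeriv ℝ (X0 (f : Eu n → ℂ)) p (EuclideanSpace.single j 1)) :=
  stmt2_general f j

end
end

section
/- Let n ≥ 1 and let f : ℝⁿ → ℂ be continuous with compact support not containing 0, and set h(q) := (2‖q‖)^{−1/2} f(q). Then ∫_{ℝⁿ} |(𝓕h)(p)|² dp = ∫_{ℝⁿ} |f(p)|² dμ(p). Consequently the weighted Fourier transform U_{𝓕,ω} f := p ↦ √(2‖p‖) · 𝓕( q ↦ (2‖q‖)^{−1/2} f(q) )(p) satisfies ‖U_{𝓕,ω} f‖_{L²(μ)} = ‖f‖_{L²(μ)}, i.e. it is isometric with respect to the Lorentz-invariant measure. -/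
/-!
The weight `(2‖q‖)^{-1/2}` is singular only at `0`, where `f` vanishes on a neighbourhood, so
`h` is again continuous with compact support, hence in `L¹ ∩ L²`. The convention `FT` differs
from Mathlib's `𝓕` by the dilation `p ↦ p / (2π)` and the factor `(2π)^{-n/2}`, which cancel in
`L²`, so Plancherel gives `‖FT h‖₂ = ‖h‖₂`; and `|h|² = |f|² / (2‖q‖)` is `|f|²` against the
density of `μ`. In the second identity the factor `2‖p‖` cancels that density off the null
set `{0}`.

Plancherel for `L¹ ∩ L²` functions comes from Mathlib's `L²` Fourier transform: tested against
smooth compactly supported functions it agrees with the Fourier integral, because `𝓕` is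
self-adjoint on Schwartz functions.
-/

open MeasureTheory Real Filter
open scoped RealInnerProductSpace FourierTransform ContDiff

noncomputable section

def lorentzMeasure (n : ℕ) : Measure (Eu n) :=
  (volume : Measure (Eu n)).withDensity fun p => ENNReal.ofReal (2 * ‖p‖)⁻¹

theorem continuous_smul_of_continuousAt_of_mem_tsupport {X 𝕜 E : Type*} [TopologicalSpace X]
    [Zero 𝕜] [TopologicalSpace 𝕜] [Zero E] [TopologicalSpace E] [SMulWithZero 𝕜 E]
    [ContinuousSMul 𝕜 E] {w : X → 𝕜} {f : X → E} (hf : Continuous f)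
    (hw : ∀ x ∈ tsupport f, ContinuousAt w x) : Continuous fun x => w x • f x :=
  continuous_of_tsupport fun x hx =>
    (hw x (tsupport_smul_subset_right w f hx)).smul hf.continuousAt

theorem MeasureTheory.Lp.norm_sq_eq_integral_norm_sq {α 𝕜 E : Type*} [MeasurableSpace α]
    {μ : Measure α} [RCLike 𝕜] [NormedAddCommGroup E] [InnerProductSpace 𝕜 E]
    (f : Lp E 2 μ) : ‖f‖ ^ 2 = ∫ x, ‖f x‖ ^ 2 ∂μ := by
  rw [@norm_sq_eq_re_inner 𝕜, L2.inner_def, ← integral_re (L2.integrable_inner f f)]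
  simp only [inner_self_eq_norm_sq_to_K]
  norm_cast

section Plancherel

variable {V F : Type*} [NormedAddCommGroup V] [InnerProductSpace ℝ V] [FiniteDimensional ℝ V]
  [MeasurableSpace V] [BorelSpace V]
  [NormedAddCommGroup F] [InnerProductSpace ℂ F] [CompleteSpace F]

theorem SchwartzMap.integral_fourier_smul_eq_integral_smul_fourier (g : SchwartzMap V ℂ)
    {f : V → F} (hf : Integrable f) :
    ∫ x, 𝓕 g x • f x = ∫ ξ, g ξ • 𝓕 f ξ := by
  simpa using! VectorFourier.integral_bilin_fourierIntegral_eq_flip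
    (ContinuousLinearMap.lsmul ℂ ℂ (E := F)) (L := innerₗ V) Real.continuous_fourierChar
    continuous_inner (g.integrable (μ := volume)) hf

theorem MeasureTheory.MemLp.coeFn_fourier_toLp {f : V → F} (hf₁ : Integrable f)
    (hf₂ : MemLp f 2) : ((𝓕 (hf₂.toLp f) : Lp F 2 volume) : V → F) =ᵐ[volume] 𝓕 f := by
  have hcont : Continuous (𝓕 f) :=
    VectorFourier.fourierIntegral_continuous Real.continuous_fourierChar continuous_inner hf₁
  refine ae_eq_of_integral_contDiff_smul_eq ((Lp.memLp _).locallyIntegrable one_le_two)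
    hcont.locallyIntegrable fun g hg hgc => ?_
  have hg_supp : HasCompactSupport (Complex.ofRealCLM ∘ g) := hgc.comp_left rfl
  have hg_smooth : ContDiff ℝ ∞ (Complex.ofRealCLM ∘ g) := by fun_prop
  set φ := hg_supp.toSchwartzMap hg_smooth
  calc ∫ x, g x • ((𝓕 (hf₂.toLp f) : Lp F 2 volume) : V → F) x
      = Lp.toTemperedDistribution (𝓕 (hf₂.toLp f) : Lp F 2 volume) φ := by simp [φ]
    _ = Lp.toTemperedDistribution (hf₂.toLp f) (𝓕 φ) := by
      rw [← Lp.fourier_toTemperedDistribution_eq]; rfl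
    _ = ∫ x, 𝓕 φ x • f x := by
      rw [Lp.toTemperedDistribution_apply]
      exact integral_congr_ae (by filter_upwards [hf₂.coeFn_toLp] with x hx; rw [hx])
    _ = ∫ ξ, g ξ • 𝓕 f ξ := by
      rw [φ.integral_fourier_smul_eq_integral_smul_fourier hf₁]
      simp [φ]

theorem integral_norm_sq_fourier {f : V → F} (hf₁ : Integrable f) (hf₂ : MemLp f 2) :
    ∫ ξ, ‖𝓕 f ξ‖ ^ 2 = ∫ x, ‖f x‖ ^ 2 :=
  calc ∫ ξ, ‖𝓕 f ξ‖ ^ 2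
      = ∫ ξ, ‖((𝓕 (hf₂.toLp f) : Lp F 2 volume) : V → F) ξ‖ ^ 2 :=
        integral_congr_ae <| (hf₂.coeFn_fourier_toLp hf₁).mono fun ξ hξ =>
          congrArg (‖·‖ ^ 2) hξ.symm
    _ = ‖hf₂.toLp f‖ ^ 2 := by
        rw [← Lp.norm_sq_eq_integral_norm_sq (𝕜 := ℂ), Lp.norm_fourier_eq]
    _ = ∫ x, ‖f x‖ ^ 2 := by
        rw [Lp.norm_sq_eq_integral_norm_sq (𝕜 := ℂ)]
        exact integral_congr_ae <| hf₂.coeFn_toLp.mono fun x hx => congrArg (‖·‖ ^ 2) hx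

end Plancherel

variable {n : ℕ}

theorem FT_eq_smul_fourier (ψ : Eu n → ℂ) (p : Eu n) :
    FT ψ p = (Real.sqrt ((2 * π) ^ n))⁻¹ • 𝓕 ψ ((2 * π)⁻¹ • p) := by
  rw [FT, Real.fourier_eq']
  congr 1
  refine integral_congr_ae (Eventually.of_forall fun x => ?_)
  have h2π : 2 * π ≠ 0 := by positivity
  have hphase : -2 * π * ⟪x, (2 * π)⁻¹ • p⟫ = -⟪p, x⟫ := by
    rw [real_inner_smul_right, real_inner_comm]
    field_simp
  simp only [smul_eq_mul, hphase]
  push_cast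
  ring_nf

theorem integral_norm_sq_FT (ψ : Eu n → ℂ) :
    ∫ p, ‖FT ψ p‖ ^ 2 = ∫ p, ‖𝓕 ψ p‖ ^ 2 := by
  have hpos : (0 : ℝ) < (2 * π) ^ n := by positivity
  have hpt : ∀ p, ‖FT ψ p‖ ^ 2 = ((2 * π) ^ n)⁻¹ * ‖𝓕 ψ ((2 * π)⁻¹ • p)‖ ^ 2 := fun p => by
    rw [FT_eq_smul_fourier, norm_smul, Real.norm_of_nonneg (by positivity), mul_pow, inv_pow,
      Real.sq_sqrt hpos.le]
  simp_rw [hpt]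
  rw [integral_const_mul, Measure.integral_comp_inv_smul_of_nonneg volume (‖𝓕 ψ ·‖ ^ 2)
    (by positivity : 0 ≤ 2 * π), finrank_euclideanSpace_fin, smul_eq_mul,
    inv_mul_cancel_left₀ hpos.ne']

theorem integral_lorentzMeasure {E : Type*} [NormedAddCommGroup E] [NormedSpace ℝ E]
    (g : Eu n → E) : ∫ p, g p ∂lorentzMeasure n = ∫ p, (2 * ‖p‖)⁻¹ • g p := by
  rw [lorentzMeasure, integral_withDensity_eq_integral_toReal_smul (by fun_prop)
    (Eventually.of_forall fun _ => ENNReal.ofReal_lt_top)]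
  congr 1 with p
  rw [ENNReal.toReal_ofReal (by positivity)]

/-- For continuous compactly supported f with 0 outside the support, and
h(q) = (2‖q‖)^{−1/2} f(q): ∫ |𝓕h(p)|² dp = ∫ |f(p)|² dμ(p). Consequently the weighted
Fourier transform (U_{𝓕,ω} f)(p) = √(2‖p‖)·𝓕(q ↦ (2‖q‖)^{−1/2} f(q))(p) is isometric
with respect to the Lorentz-invariant measure: ‖U_{𝓕,ω} f‖_{L²(μ)} = ‖f‖_{L²(μ)}. -/
theorem stmt10 {n : ℕ} (hn : 1 ≤ n) (f : Eu n → ℂ) (hf : Continuous f)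
    (hfc : HasCompactSupport f) (hf0 : 0 ∉ tsupport f) :
    (∫ p : Eu n, ‖FT (fun q : Eu n => (((Real.sqrt (2 * ‖q‖))⁻¹ : ℝ) : ℂ) * f q) p‖ ^ 2)
        = ∫ p, ‖f p‖ ^ 2 ∂(lorentzMeasure n) ∧
      (∫ p : Eu n, ‖((Real.sqrt (2 * ‖p‖) : ℝ) : ℂ) *
            FT (fun q : Eu n => (((Real.sqrt (2 * ‖q‖))⁻¹ : ℝ) : ℂ) * f q) p‖ ^ 2
          ∂(lorentzMeasure n))
        = ∫ p, ‖f p‖ ^ 2 ∂(lorentzMeasure n) := by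
  set h : Eu n → ℂ := fun q => (((Real.sqrt (2 * ‖q‖))⁻¹ : ℝ) : ℂ) * f q
  have h_cont : Continuous h := continuous_smul_of_continuousAt_of_mem_tsupport hf fun q hq => by
    have hq0 : (0 : ℝ) < 2 * ‖q‖ := by
      have : q ≠ 0 := fun h0 => hf0 (h0 ▸ hq)
      positivity
    exact Complex.continuous_ofReal.continuousAt.comp <|
      ((Real.continuous_sqrt.comp (by fun_prop)).continuousAt).inv₀ (Real.sqrt_pos.2 hq0).ne'
  have h_supp : HasCompactSupport h := hfc.mul_left
  have key : ∫ p, ‖FT h p‖ ^ 2 = ∫ p, ‖f p‖ ^ 2 ∂lorentzMeasure n := by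
    rw [integral_norm_sq_FT, integral_norm_sq_fourier (h_cont.integrable_of_hasCompactSupport
      h_supp) (h_cont.memLp_of_hasCompactSupport h_supp), integral_lorentzMeasure]
    congr 1 with q
    simp [h, mul_pow]
  refine ⟨key, ?_⟩
  have : Nontrivial (Eu n) :=
    Module.nontrivial_of_finrank_pos (R := ℝ) (by rwa [finrank_euclideanSpace_fin])
  rw [integral_lorentzMeasure, ← key]
  refine integral_congr_ae <| (Measure.ae_ne volume 0).mono fun p hp => ?_
  have hp0 : (0 : ℝ) < 2 * ‖p‖ := by positivity
  dsimp only
  rw [smul_eq_mul, norm_mul, mul_pow, Complex.norm_real,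
    Real.norm_of_nonneg (Real.sqrt_nonneg _), Real.sq_sqrt hp0.le, inv_mul_cancel_left₀ hp0.ne']
end
end

section
/- Let n ≥ 1 and j ∈ {1,…,n}, and let T be the densely defined linear operator in the Hilbert space L²(ℝⁿ, ℂ) whose domain is the image of the Schwartz space 𝒮(ℝⁿ) in L² and which acts by (Tψ)(x) = x_j ψ(x). Then T is symmetric and essentially self-adjoint: its closure is a self-adjoint operator (equivalently, the adjoint of T is self-adjoint). -/
/-!
Schwartz functions are dense in L², so T is densely defined, and since the coordinate x_j is real,
multiplication by it is symmetric. Testing against smooth compactly supported functions, which lie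
in the domain of T, identifies the adjoint T† as multiplication by x_j on its maximal domain, so
T† is symmetric as well. For a densely defined symmetric T with symmetric adjoint, T ≤ T† gives
T†† ≤ T†, while symmetry of T† gives T† ≤ T††; hence T† is self-adjoint.
-/

open MeasureTheory Real Filter
open scoped SchwartzMap

noncomputable section

open scoped ContDiff

namespace LinearPMap

variable {𝕜 E F : Type*} [RCLike 𝕜] [NormedAddCommGroup E] [InnerProductSpace 𝕜 E]
  [NormedAddCommGroup F] [InnerProductSpace 𝕜 F] [CompleteSpace E]

theorem adjoint_le_adjoint {T S : E →ₗ.[𝕜] F} (hT : Dense (T.domain : Set E)) (h : T ≤ S) :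
    S† ≤ T† :=
  IsFormalAdjoint.le_adjoint hT fun x y => by
    rw [apply_comp_inclusion h x]
    exact (adjoint_isFormalAdjoint (hT.mono h.1)).symm _ y

theorem IsFormalAdjoint.isSelfAdjoint_adjoint {T : E →ₗ.[𝕜] E} (hT : Dense (T.domain : Set E))
    (hsymm : T.IsFormalAdjoint T) (hsymm_adjoint : T†.IsFormalAdjoint T†) : IsSelfAdjoint T† := by
  have hle : T ≤ T† := hsymm.le_adjoint hT
  exact le_antisymm (adjoint_le_adjoint hT hle) (hsymm_adjoint.le_adjoint (hT.mono hle.1))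

end LinearPMap

namespace MeasureTheory

open LinearPMap

section MeasureSpace

variable {α : Type*} [MeasurableSpace α] {μ : Measure α}

theorem L2.inner_eq_integral_smul_of_ae_eq_ofReal {x : Lp ℂ 2 μ} {g : α → ℝ}
    (hx : x =ᵐ[μ] fun a => (g a : ℂ)) (f : Lp ℂ 2 μ) :
    inner ℂ x f = ∫ a, g a • f a ∂μ := by
  rw [L2.inner_def]
  refine integral_congr_ae ?_
  filter_upwards [hx] with a ha
  simp [ha, Complex.real_smul, mul_comm]

theorem isFormalAdjoint_self_of_ae_eq_ofReal_mul (S : Lp ℂ 2 μ →ₗ.[ℂ] Lp ℂ 2 μ) (m : α → ℝ)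
    (hS : ∀ f : S.domain, S f =ᵐ[μ] fun a => (m a : ℂ) * (f : Lp ℂ 2 μ) a) :
    S.IsFormalAdjoint S := by
  intro x y
  rw [L2.inner_def, L2.inner_def]
  refine integral_congr_ae ?_
  filter_upwards [hS x, hS y] with a hx hy
  simp only [hx, hy, RCLike.inner_apply, map_mul, Complex.conj_ofReal]
  ring

end MeasureSpace

section FiniteDimensional

variable {E : Type*} [NormedAddCommGroup E] [NormedSpace ℝ E] [FiniteDimensional ℝ E]
  [MeasurableSpace E] [BorelSpace E] {μ : Measure E}

theorem dense_setOf_ae_eq_schwartzMap [μ.HasTemperateGrowth] [IsFiniteMeasureOnCompacts μ] :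
    Dense {f : Lp ℂ 2 μ | ∃ ψ : 𝓢(E, ℂ), f =ᵐ[μ] ψ} :=
  (SchwartzMap.denseRange_toLpCLM (p := 2) ENNReal.ofNat_ne_top).mono <| by
    rintro _ ⟨ψ, rfl⟩
    exact ⟨ψ, ψ.coeFn_toLp 2 μ⟩

theorem adjoint_ae_eq_ofReal_mul [IsLocallyFiniteMeasure μ] {T : Lp ℂ 2 μ →ₗ.[ℂ] Lp ℂ 2 μ}
    (hT : Dense (T.domain : Set (Lp ℂ 2 μ))) {m : E → ℝ} (hm : Continuous m)
    (htest : ∀ g : E → ℝ, ContDiff ℝ ∞ g → HasCompactSupport g → ∃ x : T.domain,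
      (x : E → ℂ) =ᵐ[μ] (fun a => (g a : ℂ)) ∧ T x =ᵐ[μ] fun a => (m a : ℂ) * g a)
    (f : T†.domain) : T† f =ᵐ[μ] fun a => (m a : ℂ) * (f : Lp ℂ 2 μ) a := by
  have hloc (h : Lp ℂ 2 μ) : LocallyIntegrable h μ := (Lp.memLp h).locallyIntegrable one_le_two
  refine ae_eq_of_integral_contDiff_smul_eq (hloc _)
    ((hloc _).continuous_mul (Complex.continuous_ofReal.comp hm)) fun g hg hgc => ?_
  obtain ⟨x, hx, hTx⟩ := htest g hg hgc
  have hTx' : T x =ᵐ[μ] fun a => ((m a * g a : ℝ) : ℂ) := by simpa using hTx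
  have hadj := (adjoint_isFormalAdjoint hT).symm x f
  rw [L2.inner_eq_integral_smul_of_ae_eq_ofReal hx,
    L2.inner_eq_integral_smul_of_ae_eq_ofReal hTx'] at hadj
  rw [← hadj]
  congr 1 with a
  simp only [Complex.real_smul, Complex.ofReal_mul]
  ring

end FiniteDimensional

end MeasureTheory

theorem stmt12_general {n : ℕ} (j : Fin n)
    (T : (Lp ℂ 2 (volume : Measure (Eu n))) →ₗ.[ℂ] (Lp ℂ 2 (volume : Measure (Eu n))))
    (hdom : (T.domain : Set (Lp ℂ 2 (volume : Measure (Eu n))))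
        = {g : Lp ℂ 2 (volume : Measure (Eu n)) |
            ∃ ψ : 𝓢(Eu n, ℂ), (g : Eu n → ℂ) =ᵐ[volume] ψ})
    (hact : ∀ (g : T.domain) (ψ : 𝓢(Eu n, ℂ)),
        ((g : Lp ℂ 2 (volume : Measure (Eu n))) : Eu n → ℂ) =ᵐ[volume] ψ →
        ((T g : Lp ℂ 2 (volume : Measure (Eu n))) : Eu n → ℂ)
          =ᵐ[volume] fun x => (x j : ℂ) * ψ x) :
    (∀ x y : T.domain,
        (inner ℂ (T x) ((y : Lp ℂ 2 (volume : Measure (Eu n)))) : ℂ)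
          = inner ℂ ((x : Lp ℂ 2 (volume : Measure (Eu n)))) (T y)) ∧
      IsSelfAdjoint T.adjoint := by
  have hT : Dense (T.domain : Set (Lp ℂ 2 (volume : Measure (Eu n)))) :=
    hdom ▸ dense_setOf_ae_eq_schwartzMap
  have hmul (f : T.domain) :
      T f =ᵐ[volume] fun x => (x j : ℂ) * (f : Lp ℂ 2 (volume : Measure (Eu n))) x := by
    have hf := f.2
    rw [← SetLike.mem_coe, hdom] at hf
    obtain ⟨ψ, hψ⟩ := hf
    filter_upwards [hact f ψ hψ, hψ] with x hTx hx
    rw [hTx, hx]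
  have htest (g : Eu n → ℝ) (hg : ContDiff ℝ ∞ g) (hgc : HasCompactSupport g) :
      ∃ x : T.domain, (x : Eu n → ℂ) =ᵐ[volume] (fun a => (g a : ℂ)) ∧
        T x =ᵐ[volume] fun a => (a j : ℂ) * g a := by
    let ψ : 𝓢(Eu n, ℂ) := (hgc.comp_left Complex.ofReal_zero).toSchwartzMap
      (Complex.ofRealCLM.contDiff.comp hg)
    have hψ := ψ.coeFn_toLp 2 volume
    exact ⟨⟨ψ.toLp 2, by rw [← SetLike.mem_coe, hdom]; exact ⟨ψ, hψ⟩⟩, hψ, hact _ ψ hψ⟩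
  have hsymm := isFormalAdjoint_self_of_ae_eq_ofReal_mul T (fun x => x j) hmul
  exact ⟨hsymm, hsymm.isSelfAdjoint_adjoint hT <| isFormalAdjoint_self_of_ae_eq_ofReal_mul _ _ <|
    adjoint_ae_eq_ofReal_mul hT (EuclideanSpace.proj j).continuous htest⟩

/-- The coordinate multiplication operator (Tψ)(x) = x_j ψ(x), densely defined in
L²(ℝⁿ, ℂ) with domain the image of the Schwartz space, is symmetric and essentially
self-adjoint: its adjoint is a self-adjoint operator. -/
theorem stmt12 {n : ℕ} (hn : 1 ≤ n) (j : Fin n)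
    (T : (Lp ℂ 2 (volume : Measure (Eu n))) →ₗ.[ℂ] (Lp ℂ 2 (volume : Measure (Eu n))))
    (hdom : (T.domain : Set (Lp ℂ 2 (volume : Measure (Eu n))))
        = {g : Lp ℂ 2 (volume : Measure (Eu n)) |
            ∃ ψ : 𝓢(Eu n, ℂ), (g : Eu n → ℂ) =ᵐ[volume] ψ})
    (hact : ∀ (g : T.domain) (ψ : 𝓢(Eu n, ℂ)),
        ((g : Lp ℂ 2 (volume : Measure (Eu n))) : Eu n → ℂ) =ᵐ[volume] ψ →
        ((T g : Lp ℂ 2 (volume : Measure (Eu n))) : Eu n → ℂ)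
          =ᵐ[volume] fun x => (x j : ℂ) * ψ x) :
    (∀ x y : T.domain,
        (inner ℂ (T x) ((y : Lp ℂ 2 (volume : Measure (Eu n)))) : ℂ)
          = inner ℂ ((x : Lp ℂ 2 (volume : Measure (Eu n)))) (T y)) ∧
      IsSelfAdjoint T.adjoint :=
  stmt12_general j T hdom hact

end
end
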